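/- For the Koszul dual coalgebra A¡ of a 3-dimensional Sklyanin algebra, with basis 1; ξ₁*, ξ₂*, ξ₃*; ξ₁*ξ₁*, ξ₂*ξ₂*, ξ₃*ξ₃*; η = ξ₃*ξ₂*ξ₁* and the coproduct given by the explicit formulas (e.g. Δ(ξ₁*ξ₁*) = 1⊗ξ₁*ξ₁* + ξ₁*⊗ξ₁* + (a/b)ξ₂*⊗ξ₃* + (a/c)ξ₃*⊗ξ₂* + ξ₁*ξ₁*⊗1, and the stated formula for Δ(η)), the induced pairing on the dual algebra A! is non-degenerate, symmetric, and cyclic of degree 3; hence the 3-dimensional Sklyanin algebra is 3-Calabi–Yau. -/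
import Mathlib


open TensorProduct

namespace Stmt16

variable (k : Type*) [Field k]

/-- The underlying 8-dimensional space of the Koszul dual coalgebra `A¡` of a 3-dimensional
Sklyanin algebra, with basis labels: `0 ↦ 1`, `1,2,3 ↦ ξ₁*,ξ₂*,ξ₃*`,
`4,5,6 ↦ ξ₁*ξ₁*,ξ₂*ξ₂*,ξ₃*ξ₃*`, `7 ↦ η = ξ₃*ξ₂*ξ₁*`. -/
abbrev V := Fin 8 → k

/-- Basis vectors. -/
noncomputable def E (i : Fin 8) : V k := Pi.single i 1

/-- The grading of the basis vectors. -/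
def dg : Fin 8 → ℕ := ![0, 1, 1, 1, 2, 2, 2, 3]

/-- The explicit coproduct of `A¡` for the 3-dimensional Sklyanin algebra `A(a,b,c)`. -/
noncomputable def Δ (a b c : k) : V k →ₗ[k] V k ⊗[k] V k :=
  (Pi.basisFun k (Fin 8)).constr k
    ![E k 0 ⊗ₜ[k] E k 0,
      E k 0 ⊗ₜ[k] E k 1 + E k 1 ⊗ₜ[k] E k 0,
      E k 0 ⊗ₜ[k] E k 2 + E k 2 ⊗ₜ[k] E k 0,
      E k 0 ⊗ₜ[k] E k 3 + E k 3 ⊗ₜ[k] E k 0,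
      E k 0 ⊗ₜ[k] E k 4 + E k 1 ⊗ₜ[k] E k 1 + (a / b) • (E k 2 ⊗ₜ[k] E k 3)
        + (a / c) • (E k 3 ⊗ₜ[k] E k 2) + E k 4 ⊗ₜ[k] E k 0,
      E k 0 ⊗ₜ[k] E k 5 + E k 2 ⊗ₜ[k] E k 2 + (a / c) • (E k 1 ⊗ₜ[k] E k 3)
        + (a / b) • (E k 3 ⊗ₜ[k] E k 1) + E k 5 ⊗ₜ[k] E k 0,
      E k 0 ⊗ₜ[k] E k 6 + E k 3 ⊗ₜ[k] E k 3 + (a / b) • (E k 1 ⊗ₜ[k] E k 2)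
        + (a / c) • (E k 2 ⊗ₜ[k] E k 1) + E k 6 ⊗ₜ[k] E k 0,
      E k 0 ⊗ₜ[k] E k 7
        + (b / a) • (E k 1 ⊗ₜ[k] E k 4 + E k 2 ⊗ₜ[k] E k 5 + E k 3 ⊗ₜ[k] E k 6
            + E k 4 ⊗ₜ[k] E k 1 + E k 5 ⊗ₜ[k] E k 2 + E k 6 ⊗ₜ[k] E k 3)
        + E k 7 ⊗ₜ[k] E k 0]

/-- The multiplication on the dual algebra `A!` (convolution, dual to the coproduct). -/
noncomputable def mulD (a b c : k) (f g : Module.Dual k (V k)) : Module.Dual k (V k) :=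
  (Δ k a b c).dualMap (TensorProduct.dualDistrib k (V k) (V k) (f ⊗ₜ[k] g))

/-- The pairing `⟨f, g⟩` = coefficient of `η` in the product `f·g`. -/
noncomputable def pair (a b c : k) (f g : Module.Dual k (V k)) : k :=
  mulD k a b c f g (E k 7)

/-- A dual element is homogeneous of degree `p` if it is supported on the degree-`p` part. -/
def Homog (f : Module.Dual k (V k)) (p : ℕ) : Prop :=
  ∀ i : Fin 8, dg i ≠ p → f (E k i) = 0


lemma E_eq (i : Fin 8) : E k i = Pi.basisFun k (Fin 8) i := by simp [E]

lemma delta_apply (a b c : k) (i : Fin 8) : Δ k a b c (E k i) =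
    ![E k 0 ⊗ₜ[k] E k 0,
      E k 0 ⊗ₜ[k] E k 1 + E k 1 ⊗ₜ[k] E k 0,
      E k 0 ⊗ₜ[k] E k 2 + E k 2 ⊗ₜ[k] E k 0,
      E k 0 ⊗ₜ[k] E k 3 + E k 3 ⊗ₜ[k] E k 0,
      E k 0 ⊗ₜ[k] E k 4 + E k 1 ⊗ₜ[k] E k 1 + (a / b) • (E k 2 ⊗ₜ[k] E k 3)
        + (a / c) • (E k 3 ⊗ₜ[k] E k 2) + E k 4 ⊗ₜ[k] E k 0,
      E k 0 ⊗ₜ[k] E k 5 + E k 2 ⊗ₜ[k] E k 2 + (a / c) • (E k 1 ⊗ₜ[k] E k 3)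
        + (a / b) • (E k 3 ⊗ₜ[k] E k 1) + E k 5 ⊗ₜ[k] E k 0,
      E k 0 ⊗ₜ[k] E k 6 + E k 3 ⊗ₜ[k] E k 3 + (a / b) • (E k 1 ⊗ₜ[k] E k 2)
        + (a / c) • (E k 2 ⊗ₜ[k] E k 1) + E k 6 ⊗ₜ[k] E k 0,
      E k 0 ⊗ₜ[k] E k 7
        + (b / a) • (E k 1 ⊗ₜ[k] E k 4 + E k 2 ⊗ₜ[k] E k 5 + E k 3 ⊗ₜ[k] E k 6
            + E k 4 ⊗ₜ[k] E k 1 + E k 5 ⊗ₜ[k] E k 2 + E k 6 ⊗ₜ[k] E k 3)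
        + E k 7 ⊗ₜ[k] E k 0] i := by
  rw [E_eq, Δ, Module.Basis.constr_basis]

lemma delta0 (a b c : k) : Δ k a b c (E k 0) =
    E k 0 ⊗ₜ[k] E k 0 := delta_apply k a b c 0

lemma mulD0 (a b c : k) (f g : Module.Dual k (V k)) :
    mulD k a b c f g (E k 0) = f (E k 0) * g (E k 0) := by
  rw [mulD, LinearMap.dualMap_apply, delta0]
  simp only [map_add, map_smul, TensorProduct.dualDistrib_apply, smul_eq_mul]
  try ring

lemma delta1 (a b c : k) : Δ k a b c (E k 1) =
    E k 0 ⊗ₜ[k] E k 1 + E k 1 ⊗ₜ[k] E k 0 := delta_apply k a b c 1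

lemma mulD1 (a b c : k) (f g : Module.Dual k (V k)) :
    mulD k a b c f g (E k 1) = f (E k 0) * g (E k 1) + f (E k 1) * g (E k 0) := by
  rw [mulD, LinearMap.dualMap_apply, delta1]
  simp only [map_add, map_smul, TensorProduct.dualDistrib_apply, smul_eq_mul]
  try ring

lemma delta2 (a b c : k) : Δ k a b c (E k 2) =
    E k 0 ⊗ₜ[k] E k 2 + E k 2 ⊗ₜ[k] E k 0 := delta_apply k a b c 2

lemma mulD2 (a b c : k) (f g : Module.Dual k (V k)) :
    mulD k a b c f g (E k 2) = f (E k 0) * g (E k 2) + f (E k 2) * g (E k 0) := by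
  rw [mulD, LinearMap.dualMap_apply, delta2]
  simp only [map_add, map_smul, TensorProduct.dualDistrib_apply, smul_eq_mul]
  try ring

lemma delta3 (a b c : k) : Δ k a b c (E k 3) =
    E k 0 ⊗ₜ[k] E k 3 + E k 3 ⊗ₜ[k] E k 0 := delta_apply k a b c 3

lemma mulD3 (a b c : k) (f g : Module.Dual k (V k)) :
    mulD k a b c f g (E k 3) = f (E k 0) * g (E k 3) + f (E k 3) * g (E k 0) := by
  rw [mulD, LinearMap.dualMap_apply, delta3]
  simp only [map_add, map_smul, TensorProduct.dualDistrib_apply, smul_eq_mul]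
  try ring

lemma delta4 (a b c : k) : Δ k a b c (E k 4) =
    E k 0 ⊗ₜ[k] E k 4 + E k 1 ⊗ₜ[k] E k 1 + (a / b) • (E k 2 ⊗ₜ[k] E k 3)
        + (a / c) • (E k 3 ⊗ₜ[k] E k 2) + E k 4 ⊗ₜ[k] E k 0 := delta_apply k a b c 4

lemma mulD4 (a b c : k) (f g : Module.Dual k (V k)) :
    mulD k a b c f g (E k 4) = f (E k 0) * g (E k 4) + f (E k 1) * g (E k 1) + a / b * (f (E k 2) * g (E k 3))
      + a / c * (f (E k 3) * g (E k 2)) + f (E k 4) * g (E k 0) := by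
  rw [mulD, LinearMap.dualMap_apply, delta4]
  simp only [map_add, map_smul, TensorProduct.dualDistrib_apply, smul_eq_mul]
  try ring

lemma delta5 (a b c : k) : Δ k a b c (E k 5) =
    E k 0 ⊗ₜ[k] E k 5 + E k 2 ⊗ₜ[k] E k 2 + (a / c) • (E k 1 ⊗ₜ[k] E k 3)
        + (a / b) • (E k 3 ⊗ₜ[k] E k 1) + E k 5 ⊗ₜ[k] E k 0 := delta_apply k a b c 5

lemma mulD5 (a b c : k) (f g : Module.Dual k (V k)) :
    mulD k a b c f g (E k 5) = f (E k 0) * g (E k 5) + f (E k 2) * g (E k 2) + a / c * (f (E k 1) * g (E k 3))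
      + a / b * (f (E k 3) * g (E k 1)) + f (E k 5) * g (E k 0) := by
  rw [mulD, LinearMap.dualMap_apply, delta5]
  simp only [map_add, map_smul, TensorProduct.dualDistrib_apply, smul_eq_mul]
  try ring

lemma delta6 (a b c : k) : Δ k a b c (E k 6) =
    E k 0 ⊗ₜ[k] E k 6 + E k 3 ⊗ₜ[k] E k 3 + (a / b) • (E k 1 ⊗ₜ[k] E k 2)
        + (a / c) • (E k 2 ⊗ₜ[k] E k 1) + E k 6 ⊗ₜ[k] E k 0 := delta_apply k a b c 6

lemma mulD6 (a b c : k) (f g : Module.Dual k (V k)) :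
    mulD k a b c f g (E k 6) = f (E k 0) * g (E k 6) + f (E k 3) * g (E k 3) + a / b * (f (E k 1) * g (E k 2))
      + a / c * (f (E k 2) * g (E k 1)) + f (E k 6) * g (E k 0) := by
  rw [mulD, LinearMap.dualMap_apply, delta6]
  simp only [map_add, map_smul, TensorProduct.dualDistrib_apply, smul_eq_mul]
  try ring

lemma delta7 (a b c : k) : Δ k a b c (E k 7) =
    E k 0 ⊗ₜ[k] E k 7
        + (b / a) • (E k 1 ⊗ₜ[k] E k 4 + E k 2 ⊗ₜ[k] E k 5 + E k 3 ⊗ₜ[k] E k 6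
            + E k 4 ⊗ₜ[k] E k 1 + E k 5 ⊗ₜ[k] E k 2 + E k 6 ⊗ₜ[k] E k 3)
        + E k 7 ⊗ₜ[k] E k 0 := delta_apply k a b c 7

lemma mulD7 (a b c : k) (f g : Module.Dual k (V k)) :
    mulD k a b c f g (E k 7) = f (E k 0) * g (E k 7) + b / a * (f (E k 1) * g (E k 4) + f (E k 2) * g (E k 5) + f (E k 3) * g (E k 6)
      + f (E k 4) * g (E k 1) + f (E k 5) * g (E k 2) + f (E k 6) * g (E k 3)) + f (E k 7) * g (E k 0) := by
  rw [mulD, LinearMap.dualMap_apply, delta7]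
  simp only [map_add, map_smul, TensorProduct.dualDistrib_apply, smul_eq_mul]
  try ring

lemma term_zero {p q : ℕ} {f g : Module.Dual k (V k)} (hf : Homog k f p) (hg : Homog k g q)
    (s t : Fin 8) (h : dg s + dg t ≠ p + q) : f (E k s) * g (E k t) = 0 := by
  by_cases hs : dg s = p
  · rw [hg t fun ht => h (by rw [hs, ht]), mul_zero]
  · rw [hf s hs, zero_mul]

lemma mulD_homog {a b c : k} {p q : ℕ} {f g : Module.Dual k (V k)}
    (hf : Homog k f p) (hg : Homog k g q) :
    Homog k (mulD k a b c f g) (p + q) := by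
  intro i hi
  fin_cases i
  · show mulD k a b c f g (E k 0) = 0
    rw [mulD0, term_zero k hf hg 0 0 hi]
    try ring
  · show mulD k a b c f g (E k 1) = 0
    rw [mulD1, term_zero k hf hg 0 1 hi, term_zero k hf hg 1 0 hi]
    try ring
  · show mulD k a b c f g (E k 2) = 0
    rw [mulD2, term_zero k hf hg 0 2 hi, term_zero k hf hg 2 0 hi]
    try ring
  · show mulD k a b c f g (E k 3) = 0
    rw [mulD3, term_zero k hf hg 0 3 hi, term_zero k hf hg 3 0 hi]
    try ring
  · show mulD k a b c f g (E k 4) = 0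
    rw [mulD4, term_zero k hf hg 0 4 hi, term_zero k hf hg 1 1 hi, term_zero k hf hg 2 3 hi, term_zero k hf hg 3 2 hi, term_zero k hf hg 4 0 hi]
    try ring
  · show mulD k a b c f g (E k 5) = 0
    rw [mulD5, term_zero k hf hg 0 5 hi, term_zero k hf hg 2 2 hi, term_zero k hf hg 1 3 hi, term_zero k hf hg 3 1 hi, term_zero k hf hg 5 0 hi]
    try ring
  · show mulD k a b c f g (E k 6) = 0
    rw [mulD6, term_zero k hf hg 0 6 hi, term_zero k hf hg 3 3 hi, term_zero k hf hg 1 2 hi, term_zero k hf hg 2 1 hi, term_zero k hf hg 6 0 hi]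
    try ring
  · show mulD k a b c f g (E k 7) = 0
    rw [mulD7, term_zero k hf hg 0 7 hi, term_zero k hf hg 1 4 hi, term_zero k hf hg 2 5 hi, term_zero k hf hg 3 6 hi, term_zero k hf hg 4 1 hi, term_zero k hf hg 5 2 hi, term_zero k hf hg 6 3 hi, term_zero k hf hg 7 0 hi]
    try ring

lemma pair_zero {a b c : k} {p q : ℕ} {f g : Module.Dual k (V k)}
    (hf : Homog k f p) (hg : Homog k g q) (h : p + q ≠ 3) : pair k a b c f g = 0 :=
  mulD_homog k hf hg 7 fun h3 => h h3.symm

lemma pair_symm (a b c : k) (f g : Module.Dual k (V k)) :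
    pair k a b c f g = pair k a b c g f := by
  rw [pair, pair, mulD7, mulD7]; ring

lemma pair_cyclic (a b c : k) (ha : a ≠ 0) (hb : b ≠ 0) (hc : c ≠ 0)
    (f g h : Module.Dual k (V k)) :
    pair k a b c (mulD k a b c f g) h = pair k a b c (mulD k a b c h f) g := by
  rw [pair, pair, mulD7, mulD7]
  simp only [mulD0, mulD1, mulD2, mulD3, mulD4, mulD5, mulD6, mulD7]
  ring

noncomputable def P (j : Fin 8) : Module.Dual k (V k) := LinearMap.proj j

lemma P_apply (j i : Fin 8) : P k j (E k i) = if i = j then 1 else 0 := by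
  simp [P, E, Pi.single_apply, eq_comm]

theorem stmt16_aux (a b c : k)
    (habc : a * b * c ≠ 0)
    (hgen : (3 * a * b * c) ^ 3 ≠ (a ^ 3 + b ^ 3 + c ^ 3) ^ 3)
    (hD : ¬(a ^ 3 = b ^ 3 ∧ b ^ 3 = c ^ 3)) :
    (∀ f : Module.Dual k (V k), f ≠ 0 → ∃ g, pair k a b c f g ≠ 0) ∧
    (∀ (p q : ℕ) (f g : Module.Dual k (V k)), Homog k f p → Homog k g q →
      pair k a b c f g = (-1 : k) ^ (p * q) * pair k a b c g f) ∧
    (∀ (p q r : ℕ) (f g h : Module.Dual k (V k)), Homog k f p → Homog k g q → Homog k h r →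
      pair k a b c (mulD k a b c f g) h =
        (-1 : k) ^ ((p + q) * r) * pair k a b c (mulD k a b c h f) g) := by
  have ha : a ≠ 0 := fun h => habc (by simp [h])
  have hb : b ≠ 0 := fun h => habc (by simp [h])
  have hc : c ≠ 0 := fun h => habc (by simp [h])
  refine ⟨?_, ?_, ?_⟩
  · intro f hf
    by_contra hcon
    push_neg at hcon
    apply hf
    have key : ∀ i : Fin 8, f (E k i) = 0 := by
      have h0 := hcon (P k 7)
      have h1 := hcon (P k 4)
      have h2 := hcon (P k 5)
      have h3 := hcon (P k 6)
      have h4 := hcon (P k 1)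
      have h5 := hcon (P k 2)
      have h6 := hcon (P k 3)
      have h7 := hcon (P k 0)
      rw [pair, mulD7] at h0 h1 h2 h3 h4 h5 h6 h7
      simp only [P_apply] at h0 h1 h2 h3 h4 h5 h6 h7
      simp [ha, hb, div_eq_zero_iff] at h0 h1 h2 h3 h4 h5 h6 h7
      intro i
      fin_cases i
      · exact h0
      · exact h1
      · exact h2
      · exact h3
      · exact h4
      · exact h5
      · exact h6
      · exact h7
    refine Module.Basis.ext (Pi.basisFun k (Fin 8)) fun i => ?_
    rw [← E_eq, key i]
    simp
  · intro p q f g hf hg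
    rcases Nat.even_or_odd (p * q) with he | ho
    · rw [he.neg_one_pow, one_mul, pair_symm]
    · rw [Nat.odd_mul] at ho
      obtain ⟨⟨x, hx⟩, ⟨y, hy⟩⟩ := ho
      rw [pair_zero k hf hg (by omega), pair_zero k hg hf (by omega), mul_zero]
  · intro p q r f g h hf hg hh
    rcases Nat.even_or_odd ((p + q) * r) with he | ho
    · rw [he.neg_one_pow, one_mul, pair_cyclic k a b c ha hb hc]
    · rw [Nat.odd_mul] at ho
      obtain ⟨⟨x, hx⟩, ⟨y, hy⟩⟩ := ho
      rw [pair_zero k (mulD_homog k hf hg) hh (by omega),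
          pair_zero k (mulD_homog k hh hf) hg (by omega), mul_zero]

/-- For the Koszul dual coalgebra `A¡` of a 3-dimensional Sklyanin algebra
(generic `a, b, c`), with the explicit coproduct above, the induced pairing on the dual
algebra `A!` is non-degenerate, graded symmetric, and cyclic of degree 3; hence (by Van den
Bergh's criterion) the 3-dimensional Sklyanin algebra is 3-Calabi-Yau. -/
theorem stmt16 (a b c : k)
    (habc : a * b * c ≠ 0)
    (hgen : (3 * a * b * c) ^ 3 ≠ (a ^ 3 + b ^ 3 + c ^ 3) ^ 3)
    (hD : ¬(a ^ 3 = b ^ 3 ∧ b ^ 3 = c ^ 3)) :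
    (∀ f : Module.Dual k (V k), f ≠ 0 → ∃ g, pair k a b c f g ≠ 0) ∧
    (∀ (p q : ℕ) (f g : Module.Dual k (V k)), Homog k f p → Homog k g q →
      pair k a b c f g = (-1 : k) ^ (p * q) * pair k a b c g f) ∧
    (∀ (p q r : ℕ) (f g h : Module.Dual k (V k)), Homog k f p → Homog k g q → Homog k h r →
      pair k a b c (mulD k a b c f g) h =
        (-1 : k) ^ ((p + q) * r) * pair k a b c (mulD k a b c h f) g) := by
  exact stmt16_aux k a b c habc hgen hD

end Stmt16
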